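/- Let triangles ABC and A'B'C' have equal acute angles at C and C' (∠C = ∠C'), equal sides AB = A'B', and supplementary angles at A (∠A + ∠A' = π). Then CB = C'B'. -/

import Mathlib

open EuclideanGeometry Real

noncomputable section

/-- The Euclidean plane. -/
abbrev Pt : Type := EuclideanSpace ℝ (Fin 2)

/-- The point of the Euclidean plane with the given coordinates. -/
def pt (x y : ℝ) : Pt := WithLp.toLp 2 ![x, y]

/-- By the sine rule `sin C · CB = sin A · AB`. -/
theorem dist_eq_of_angle_eq_of_sin_angle_eq {V P : Type*} [NormedAddCommGroup V]
    [InnerProductSpace ℝ V] [MetricSpace P] [NormedAddTorsor V P] {A B C A' B' C' : P}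
    (h : ¬Collinear ℝ ({A, C, B} : Set P)) (hC : ∠ A C B = ∠ A' C' B')
    (hA : Real.sin (∠ B A C) = Real.sin (∠ B' A' C')) (hAB : dist A B = dist A' B') :
    dist C B = dist C' B' := by
  have hsin : Real.sin (∠ A C B) ≠ 0 := sin_ne_zero_of_not_collinear h
  apply mul_left_cancel₀ hsin
  calc Real.sin (∠ A C B) * dist C B = Real.sin (∠ B A C) * dist B A := law_sin A C B
    _ = Real.sin (∠ B' A' C') * dist B' A' := by rw [hA, dist_comm, hAB, dist_comm]
    _ = Real.sin (∠ A C B) * dist C' B' := by rw [hC, law_sin A' C' B']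

theorem side_eq_of_supplementary_angles (A B C A' B' C' : Pt)
    (hABC : AffineIndependent ℝ ![A, B, C])
    (hang : ∠ A C B = ∠ A' C' B')
    (hside : dist A B = dist A' B')
    (hsupp : ∠ B A C + ∠ B' A' C' = π) :
    dist C B = dist C' B' := by
  have hnc : ¬Collinear ℝ ({A, C, B} : Set Pt) := by
    rw [Set.pair_comm]
    exact affineIndependent_iff_not_collinear_set.mp hABC
  refine dist_eq_of_angle_eq_of_sin_angle_eq hnc hang ?_ hside
  rw [← Real.sin_pi_sub, ← hsupp, add_sub_cancel_left]
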